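/- arXiv:2111.04960 — 6 statements merged into one kernel-verified Lean document; each statement's English description precedes it below -/
import Mathlib

section
/- Square root law (scalar form): let n be a natural number with n ≥ 1, let ε ≥ 0 be real, and let a ≥ 1 be a real number with a − Real.log a − 1 ≤ 4·ε²/n. Then (n/2) · Real.log a ≤ 2 · ε · Real.sqrt n. -/
/-- Square root law (scalar form). -/
theorem square_root_law_scalar (n : ℕ) (hn : 1 ≤ n) (ε : ℝ) (hε : 0 ≤ ε)
    (a : ℝ) (ha : 1 ≤ a) (hbudget : a - Real.log a - 1 ≤ 4 * ε ^ 2 / n) :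
    (n : ℝ) / 2 * Real.log a ≤ 2 * ε * Real.sqrt n := by
  set t := Real.log a with ht
  have ht0 : 0 ≤ t := Real.log_nonneg ha
  have hnpos : (0:ℝ) < n := by positivity
  have hexp : (1 + t/2)^2 ≤ a := by
    have h1 : 1 + t/2 ≤ Real.exp (t/2) := by linarith [Real.add_one_le_exp (t/2)]
    have h2 : (1 + t/2)^2 ≤ (Real.exp (t/2))^2 := by
      apply pow_le_pow_left₀ (by linarith) h1
    have h3 : (Real.exp (t/2))^2 = Real.exp t := by
      rw [← Real.exp_nat_mul]
      ring_nf
    rw [h3] at h2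
    have h4 : Real.exp t = a := by
      rw [ht]; exact Real.exp_log (by linarith)
    linarith [h2, h4.le]
  have hq : t^2/4 ≤ a - t - 1 := by nlinarith
  have hnt : (n:ℝ) * t^2 ≤ 16 * ε^2 := by
    have := hbudget
    have h5 : t^2/4 ≤ 4 * ε^2 / n := le_trans hq this
    rw [div_le_div_iff₀ (by norm_num) hnpos] at h5
    nlinarith
  have hsq : Real.sqrt n * t ≤ 4 * ε := by
    have hnonneg : 0 ≤ Real.sqrt n * t := by positivity
    have hsq2 : (Real.sqrt n * t)^2 ≤ (4*ε)^2 := by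
      rw [mul_pow, Real.sq_sqrt hnpos.le]
      nlinarith
    nlinarith [hnonneg, hsq2]
  have hns : (n:ℝ) = Real.sqrt n * Real.sqrt n := (Real.mul_self_sqrt hnpos.le).symm
  have hsn : 0 ≤ Real.sqrt n := Real.sqrt_nonneg _
  nlinarith [mul_le_mul_of_nonneg_left hsq hsn]
end

section
/- Forward eigenvalue budget lemma: let n be a natural number with n ≥ 1, let c ≥ 0 be real, and let t* ≥ 0 be the real number with Real.exp t* − t* − 1 = c/n. Then for every t : Fin n → ℝ with ∑ i, (Real.exp (t i) − t i − 1) ≤ c, one has ∑ i, t i ≤ n · t*. -/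
/-- Forward eigenvalue budget lemma. -/
theorem forward_eigenvalue_budget (n : ℕ) (hn : 1 ≤ n) (c : ℝ) (hc : 0 ≤ c)
    (tstar : ℝ) (htstar : 0 ≤ tstar) (hEq : Real.exp tstar - tstar - 1 = c / n)
    (t : Fin n → ℝ) (hbudget : ∑ i, (Real.exp (t i) - t i - 1) ≤ c) :
    ∑ i, t i ≤ n * tstar := by
  have hn0 : (0:ℝ) < n := by exact_mod_cast hn
  set m : ℝ := (∑ i, t i) / n with hm
  -- Jensen for exp: exp m ≤ (1/n) ∑ exp (t i)
  have hjensen : Real.exp m ≤ (1 / n) * ∑ i, Real.exp (t i) := by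
    have := convexOn_exp.map_sum_le (t := Finset.univ) (w := fun _ : Fin n => (1:ℝ)/n)
      (p := t) (fun i _ => by positivity)
      (by simp [Finset.sum_const]; field_simp) (fun i _ => trivial)
    simp only [smul_eq_mul] at this
    calc Real.exp m = Real.exp (∑ i, (1/n) * t i) := by
          rw [hm, ← Finset.mul_sum]; ring_nf
      _ ≤ ∑ i, (1/n) * Real.exp (t i) := this
      _ = (1/n) * ∑ i, Real.exp (t i) := by rw [Finset.mul_sum]
  -- f(m) ≤ c/n = f(t*)
  have hfm : Real.exp m - m - 1 ≤ Real.exp tstar - tstar - 1 := by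
    rw [hEq]
    have h1 : (1/n : ℝ) * ∑ i, Real.exp (t i) - m - 1 ≤ c / n := by
      have : (1/n : ℝ) * (∑ i, (Real.exp (t i) - t i - 1)) ≤ (1/n) * c := by
        apply mul_le_mul_of_nonneg_left hbudget (by positivity)
      rw [Finset.mul_sum] at this
      simp only [mul_sub] at this
      rw [Finset.sum_sub_distrib, Finset.sum_sub_distrib, ← Finset.mul_sum,
        ← Finset.mul_sum] at this
      have hsum1 : ∑ _i : Fin n, (1/n : ℝ) * 1 = 1 := by
        simp [Finset.sum_const]; field_simp
      rw [hsum1] at this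
      calc (1/n : ℝ) * ∑ i, Real.exp (t i) - m - 1
          = (1/n) * ∑ i, Real.exp (t i) - (1/n) * ∑ i, t i - 1 := by
            rw [hm]; ring_nf
        _ ≤ (1/n) * c := this
        _ = c / n := by ring
    linarith [hjensen]
  -- now conclude m ≤ tstar (if m ≤ 0, trivial)
  have hmle : m ≤ tstar := by
    by_contra h
    push_neg at h
    -- tstar < m, both ≥ 0, so f tstar < f m, contradiction
    have h2 : (1:ℝ) ≤ Real.exp tstar := Real.one_le_exp htstar
    have e1 : Real.exp m = Real.exp tstar * Real.exp (m - tstar) := by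
      rw [← Real.exp_add]; ring_nf
    have e2 : 1 + (m - tstar) < Real.exp (m - tstar) := by
      have := Real.add_one_lt_exp (show m - tstar ≠ 0 by linarith); linarith
    nlinarith [Real.exp_pos tstar]
  calc ∑ i, t i = n * m := by rw [hm]; field_simp
    _ ≤ n * tstar := by nlinarith
end

section
/- Reverse eigenvalue budget lemma: let n be a natural number with n ≥ 1, let c ≥ 0 be real, and let t* ≥ 0 be the real number with Real.exp (−t*) + t* − 1 = c/n. Then for every t : Fin n → ℝ with ∑ i, (Real.exp (−t i) + t i − 1) ≤ c, one has ∑ i, t i ≤ n · t*. -/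
lemma tangent_line_key (s x : ℝ) :
    Real.exp (-s) + s - 1 + (1 - Real.exp (-s)) * (x - s) ≤ Real.exp (-x) + x - 1 := by
  have h := Real.add_one_le_exp (s - x)
  have hp : (0:ℝ) ≤ Real.exp (-s) := (Real.exp_pos _).le
  have hmul := mul_le_mul_of_nonneg_left h hp
  have hx : Real.exp (-s) * Real.exp (s - x) = Real.exp (-x) := by
    rw [← Real.exp_add]; ring_nf
  nlinarith [hmul, hx]

/-- Reverse eigenvalue budget lemma. -/
theorem reverse_eigenvalue_budget (n : ℕ) (hn : 1 ≤ n) (c : ℝ) (hc : 0 ≤ c)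
    (tstar : ℝ) (htstar : 0 ≤ tstar) (hEq : Real.exp (-tstar) + tstar - 1 = c / n)
    (t : Fin n → ℝ) (hbudget : ∑ i, (Real.exp (-t i) + t i - 1) ≤ c) :
    ∑ i, t i ≤ n * tstar := by
  have hn0 : (0:ℝ) < n := by exact_mod_cast hn
  rcases eq_or_lt_of_le htstar with h0 | hpos
  · -- tstar = 0, hence c = 0, each term is 0
    have hc0 : c = 0 := by
      have : c / n = 0 := by rw [← hEq, ← h0]; simp
      field_simp at this; linarith [this]
    have hnonneg : ∀ i ∈ Finset.univ, 0 ≤ Real.exp (-t i) + t i - 1 := by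
      intro i _
      have := Real.add_one_le_exp (-(t i))
      linarith
    have hsum0 : ∑ i, (Real.exp (-t i) + t i - 1) = 0 := by
      have := Finset.sum_nonneg hnonneg
      linarith [hbudget, hc0.symm ▸ hbudget]
    have hall : ∀ i ∈ Finset.univ, Real.exp (-t i) + t i - 1 = 0 :=
      (Finset.sum_eq_zero_iff_of_nonneg hnonneg).mp hsum0
    have hti : ∀ i : Fin n, t i = 0 := by
      intro i
      by_contra hne
      have := Real.add_one_lt_exp (x := -(t i)) (by simpa using hne)
      have h2 := hall i (Finset.mem_univ i)
      linarith
    rw [← h0]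
    simp [hti]
  · -- tstar > 0
    have hcoef : 0 < 1 - Real.exp (-tstar) := by
      have : Real.exp (-tstar) < 1 := by
        rw [Real.exp_lt_one_iff]; linarith
      linarith
    have hkey : ∀ i ∈ Finset.univ,
        Real.exp (-tstar) + tstar - 1 + (1 - Real.exp (-tstar)) * (t i - tstar)
          ≤ Real.exp (-t i) + t i - 1 := fun i _ => tangent_line_key tstar (t i)
    have hsum := Finset.sum_le_sum hkey
    have hcard : (Finset.univ : Finset (Fin n)).card = n := by simp
    rw [Finset.sum_add_distrib, Finset.sum_const, hcard, ← Finset.mul_sum,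
      Finset.sum_sub_distrib, Finset.sum_const, hcard] at hsum
    have hle := le_trans hsum hbudget
    simp only [nsmul_eq_mul, hEq] at hle
    have hcn : (n:ℝ) * (c / n) = c := by field_simp
    rw [hcn] at hle
    nlinarith [hle, hcoef]
end

section
/- Theorem 2 (matrix form, value): let ε > 0 and let a* be the embedding factor. Then the set of real numbers { Real.log (det Σs) : (μs, Σs) feasible } has greatest element n · Real.log a* + Real.log (det Σc), and this greatest value is attained at the feasible pair μs = μc, Σs = a* • Σc. -/
open Matrix

/-- The (forward) Gaussian KL expression. -/
noncomputable def klGauss {n : ℕ} (Sc : Matrix (Fin n) (Fin n) ℝ) (μc : Fin n → ℝ)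
    (Ss : Matrix (Fin n) (Fin n) ℝ) (μs : Fin n → ℝ) : ℝ :=
  (1 / 2) * ((Sc⁻¹ * Ss).trace + (μc - μs) ⬝ᵥ (Sc⁻¹ *ᵥ (μc - μs))
    + Real.log (Sc.det / Ss.det) - n)

/-!
Reduce to the positive definite matrix `M = Σs^{1/2} Σc⁻¹ Σs^{1/2}`, whose trace is
`tr (Σc⁻¹ Σs)` and whose log-determinant is `L = log det Σs - log det Σc`. Dropping the
(nonnegative) mean term, feasibility gives `tr M - L - n ≤ n (a* - log a* - 1)`. On the other
hand `a log λ ≤ λ + a log a - a` for every eigenvalue `λ` of `M` (this is `log x ≤ x - 1` at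
`x = λ / a`), so `a* L ≤ tr M + n (a* log a* - a*)`. Adding the two bounds leaves
`(a* - 1) L ≤ (a* - 1) n log a*`, and `a* > 1` because `ε > 0`. Equality holds at `Σs = a* Σc`.
-/

open Real

lemma Real.mul_log_le_add_mul_log_sub {x a : ℝ} (hx : 0 < x) (ha : 0 < a) :
    a * log x ≤ x + (a * log a - a) := by
  have h := mul_le_mul_of_nonneg_left (log_le_sub_one_of_pos (div_pos hx ha)) ha.le
  rw [log_div hx.ne' ha.ne', mul_sub_one, mul_div_cancel₀ x ha.ne'] at h
  linarith

namespace Matrix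

variable {ι : Type*} [Fintype ι] [DecidableEq ι]

lemma PosDef.mul_log_det_le_trace {M : Matrix ι ι ℝ} (hM : M.PosDef) {a : ℝ} (ha : 0 < a) :
    a * log M.det ≤ M.trace + Fintype.card ι * (a * log a - a) := by
  have hev := hM.eigenvalues_pos
  rw [hM.1.det_eq_prod_eigenvalues, hM.1.trace_eq_sum_eigenvalues]
  simp only [RCLike.ofReal_real_eq_id, id]
  rw [log_prod fun i _ => (hev i).ne', Finset.mul_sum, ← Finset.card_univ, ← nsmul_eq_mul,
    ← Finset.sum_const, ← Finset.sum_add_distrib]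
  exact Finset.sum_le_sum fun i _ => mul_log_le_add_mul_log_sub (hev i) ha

lemma PosDef.exists_posDef_trace_inv_mul_det_div {A S : Matrix ι ι ℝ} (hA : A.PosDef)
    (hS : S.PosDef) :
    ∃ M : Matrix ι ι ℝ, M.PosDef ∧ M.trace = (A⁻¹ * S).trace ∧ M.det = S.det / A.det := by
  open scoped MatrixOrder in
  obtain ⟨B, hB, hBB⟩ : ∃ B : Matrix ι ι ℝ, B.PosSemidef ∧ B * B = S :=
    ⟨CFC.sqrt S, nonneg_iff_posSemidef.mp (CFC.sqrt_nonneg S),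
      CFC.sqrt_mul_sqrt_self S (nonneg_iff_posSemidef.mpr hS.posSemidef)⟩
  have hdet : (B * A⁻¹ * B).det = S.det / A.det := by
    rw [← hBB, det_mul, det_mul, det_mul, det_nonsing_inv, Ring.inverse_eq_inv', div_eq_mul_inv]
    ring
  have hsemi : (B * A⁻¹ * B).PosSemidef := by
    simpa only [hB.1.eq] using hA.inv.posSemidef.conjTranspose_mul_mul_same B
  refine ⟨B * A⁻¹ * B, hsemi.posDef_iff_det_ne_zero.mpr ?_, ?_, hdet⟩
  · rw [hdet]
    exact (div_pos hS.det_pos hA.det_pos).ne'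
  · rw [trace_mul_cycle, trace_mul_comm, hBB]

lemma log_det_smul {A : Matrix ι ι ℝ} (hA : A.det ≠ 0) {a : ℝ} (ha : a ≠ 0) :
    log (a • A).det = Fintype.card ι * log a + log A.det := by
  rw [det_smul, log_mul (pow_ne_zero _ ha) hA, log_pow]

end Matrix

lemma klGauss_smul_self {n : ℕ} {Sc : Matrix (Fin n) (Fin n) ℝ} (hSc : Sc.det ≠ 0)
    (μc : Fin n → ℝ) {a : ℝ} (ha : a ≠ 0) :
    klGauss Sc μc (a • Sc) μc = n * (a - log a - 1) / 2 := by
  have hlog : log (Sc.det / (a • Sc).det) = -(n * log a) := by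
    have hdet : (a • Sc).det ≠ 0 := by
      rw [Matrix.det_smul]
      exact mul_ne_zero (pow_ne_zero _ ha) hSc
    rw [log_div hSc hdet, log_det_smul hSc ha, Fintype.card_fin]
    ring
  rw [klGauss, Matrix.mul_smul, nonsing_inv_mul Sc (isUnit_iff_ne_zero.mpr hSc), trace_smul,
    trace_one, hlog, sub_self, zero_dotProduct, Fintype.card_fin, smul_eq_mul]
  ring

lemma log_det_le_of_klGauss_le {n : ℕ} {Sc Ss : Matrix (Fin n) (Fin n) ℝ} (hSc : Sc.PosDef)
    (hSs : Ss.PosDef) (μc μs : Fin n → ℝ) {a : ℝ} (ha : 1 < a)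
    (hkl : klGauss Sc μc Ss μs ≤ n * (a - log a - 1) / 2) :
    log Ss.det ≤ n * log a + log Sc.det := by
  obtain ⟨M, hM, htr, hdet⟩ := hSc.exists_posDef_trace_inv_mul_det_div hSs
  have hlogM : log M.det = log Ss.det - log Sc.det := by
    rw [hdet, log_div hSs.det_pos.ne' hSc.det_pos.ne']
  have hmean : 0 ≤ (μc - μs) ⬝ᵥ (Sc⁻¹ *ᵥ (μc - μs)) := by
    simpa using hSc.inv.posSemidef.dotProduct_mulVec_nonneg (μc - μs)
  have hconcave := hM.mul_log_det_le_trace (zero_lt_one.trans ha)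
  rw [Fintype.card_fin, hlogM, htr] at hconcave
  rw [klGauss, log_div hSc.det_pos.ne' hSs.det_pos.ne'] at hkl
  have hmul : (a - 1) * (log Ss.det - log Sc.det) ≤ (a - 1) * (n * log a) := by linarith
  linarith [le_of_mul_le_mul_left hmul (sub_pos.mpr ha)]

/-- Theorem 2 (matrix form, value): the set of `log det Σs` over feasible pairs
`(μs, Σs)` has greatest element `n · log a* + log det Σc`, attained at
`μs = μc`, `Σs = a* • Σc`. -/
theorem klGauss_max_logdet {n : ℕ} (hn : 1 ≤ n)
    (Sc : Matrix (Fin n) (Fin n) ℝ) (hSc : Sc.PosDef) (μc : Fin n → ℝ)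
    (ε : ℝ) (hε : 0 < ε)
    (astar : ℝ) (hastar1 : 1 ≤ astar)
    (hastar : astar - Real.log astar - 1 = 4 * ε ^ 2 / n) :
    IsGreatest
        {x : ℝ | ∃ (μs : Fin n → ℝ) (Ss : Matrix (Fin n) (Fin n) ℝ),
          Ss.PosDef ∧ klGauss Sc μc Ss μs ≤ 2 * ε ^ 2 ∧ x = Real.log Ss.det}
        ((n : ℝ) * Real.log astar + Real.log Sc.det) ∧
      (astar • Sc).PosDef ∧ klGauss Sc μc (astar • Sc) μc ≤ 2 * ε ^ 2 ∧
        Real.log (astar • Sc).det = (n : ℝ) * Real.log astar + Real.log Sc.det := by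
  have hn0 : (0 : ℝ) < n := by exact_mod_cast hn
  have hbudget : 2 * ε ^ 2 = n * (astar - log astar - 1) / 2 := by
    rw [hastar]
    field_simp
    ring
  have hone_lt : 1 < astar := by
    refine hastar1.lt_of_ne ?_
    rintro rfl
    rw [log_one, sub_zero, sub_self] at hastar
    exact (div_pos (by positivity) hn0).ne hastar
  have hpos : astar ≠ 0 := (zero_lt_one.trans hone_lt).ne'
  have hPD : (astar • Sc).PosDef := hSc.smul (zero_lt_one.trans hone_lt)
  have hfeas : klGauss Sc μc (astar • Sc) μc ≤ 2 * ε ^ 2 :=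
    (klGauss_smul_self hSc.det_pos.ne' μc hpos).trans_le hbudget.ge
  have hlog := log_det_smul hSc.det_pos.ne' hpos
  rw [Fintype.card_fin] at hlog
  refine ⟨⟨⟨μc, astar • Sc, hPD, hfeas, hlog.symm⟩, ?_⟩, hPD, hfeas, hlog⟩
  rintro _ ⟨μs, Ss, hSs, hkl, rfl⟩
  exact log_det_le_of_klGauss_le hSc hSs μc μs hone_lt (hbudget ▸ hkl)
end

section
/- Theorem 2 (matrix form, uniqueness of maximizer): let ε > 0 and let a* be the embedding factor. If (μs, Σs) is feasible and Real.log (det Σs) = n · Real.log a* + Real.log (det Σc), then μs = μc and Σs = a* • Σc. -/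
/-!
Write `Σc⁻¹ = B Bᴴ` with `B` invertible and whiten: for the positive definite `M = Bᴴ Σs B` the
KL expression becomes `½ (tr M + q - log det M - n)`, where `q ≥ 0` is the Mahalanobis term. At
`log det M = n log a*` feasibility says `tr M + q ≤ n a*`. On the other hand, summing
`t - 1 - log t ≥ 0` over `t = λᵢ / a*` for the eigenvalues `λᵢ` of `M` gives `tr M ≥ n a*`, with
equality only if every `λᵢ = a*`. Hence `q = 0` and `M = a* • 1`.
-/

open Matrix

open scoped MatrixOrder

theorem Real.eq_of_sum_le_of_sum_log_eq {ι : Type*} [Fintype ι] {x : ι → ℝ} {a : ℝ}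
    (hx : ∀ i, 0 < x i) (ha : 0 < a)
    (hlog : ∑ i, Real.log (x i) = Fintype.card ι * Real.log a)
    (hsum : ∑ i, x i ≤ Fintype.card ι * a) (i : ι) : x i = a := by
  set φ : ι → ℝ := fun j ↦ x j / a - 1 - Real.log (x j / a)
  have hφ_nonneg (j : ι) : 0 ≤ φ j := by
    linarith [Real.log_le_sub_one_of_pos (div_pos (hx j) ha)]
  have hφ_sum_nonpos : ∑ j, φ j ≤ 0 := by
    have hlog_div (j : ι) : Real.log (x j / a) = Real.log (x j) - Real.log a :=
      Real.log_div (hx j).ne' ha.ne'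
    simp only [φ, hlog_div, Finset.sum_sub_distrib, ← Finset.sum_div, hlog, Finset.sum_const,
      Finset.card_univ, nsmul_eq_mul, mul_one]
    rw [sub_self, sub_zero, sub_nonpos, div_le_iff₀ ha]
    linarith
  have hφ_eq_zero : φ i = 0 :=
    (Finset.sum_eq_zero_iff_of_nonneg fun j _ ↦ hφ_nonneg j).mp
      (le_antisymm hφ_sum_nonpos (Finset.sum_nonneg fun j _ ↦ hφ_nonneg j)) i (Finset.mem_univ i)
  by_contra hne
  have hlt := Real.log_lt_sub_one_of_pos (div_pos (hx i) ha)
    (by rwa [ne_eq, div_eq_one_iff_eq ha.ne'])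
  simp only [φ] at hφ_eq_zero
  linarith

theorem Matrix.IsHermitian.eq_smul_one_of_eigenvalues_eq {𝕜 n : Type*} [RCLike 𝕜] [Fintype n]
    [DecidableEq n] {A : Matrix n n 𝕜} (hA : A.IsHermitian) {c : ℝ}
    (h : ∀ i, hA.eigenvalues i = c) : A = (c : 𝕜) • 1 := by
  have hdiag : diagonal (RCLike.ofReal ∘ hA.eigenvalues) = (c : 𝕜) • (1 : Matrix n n 𝕜) := by
    rw [smul_one_eq_diagonal]
    congr with i
    simp [h i]
  rw [hA.spectral_theorem, hdiag, map_smul, map_one]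

theorem Matrix.PosDef.eq_smul_one_of_trace_le_of_log_det_eq {n : Type*} [Fintype n]
    [DecidableEq n] {M : Matrix n n ℝ} (hM : M.PosDef) {a : ℝ} (ha : 0 < a)
    (hdet : Real.log M.det = Fintype.card n * Real.log a)
    (htrace : M.trace ≤ Fintype.card n * a) : M = a • 1 := by
  refine hM.1.eq_smul_one_of_eigenvalues_eq
    (Real.eq_of_sum_le_of_sum_log_eq hM.eigenvalues_pos ha ?_ ?_)
  · simpa [hM.1.det_eq_prod_eigenvalues,
      Real.log_prod fun i _ ↦ (hM.eigenvalues_pos i).ne'] using hdet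
  · simpa [hM.1.trace_eq_sum_eigenvalues] using htrace

section Whitening

variable {𝕜 n : Type*} [Field 𝕜] [StarRing 𝕜] [Fintype n] [DecidableEq n]
  {A B S : Matrix n n 𝕜}

theorem Matrix.det_star_mul_mul_eq_div_of_inv_eq_mul_star (hB : A⁻¹ = B * star B) :
    (star B * S * B).det = S.det / A.det := by
  rw [det_mul, det_mul, mul_right_comm, ← det_mul, det_mul_comm, ← hB, det_nonsing_inv,
    Ring.inverse_eq_inv', div_eq_inv_mul]

theorem Matrix.eq_smul_inv_of_star_mul_mul_eq_smul_one (hB : IsUnit B) {c : 𝕜}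
    (h : star B * S * B = c • 1) : S = c • (B * star B)⁻¹ := by
  have hB_det : IsUnit B.det := (isUnit_iff_isUnit_det B).mp hB
  have hBs_det : IsUnit (star B).det := (isUnit_iff_isUnit_det _).mp hB.star
  calc S = (star B)⁻¹ * (star B * S * B) * B⁻¹ := by
        rw [← mul_assoc, ← mul_assoc, nonsing_inv_mul _ hBs_det, one_mul,
          mul_nonsing_inv_cancel_right _ _ hB_det]
    _ = c • (B * star B)⁻¹ := by
        rw [h, mul_inv_rev, Matrix.mul_smul, mul_one, Matrix.smul_mul]

end Whitening

theorem klGauss_eq_of_inv_eq_mul_star {n : ℕ} {Sc Ss B : Matrix (Fin n) (Fin n) ℝ}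
    (μc μs : Fin n → ℝ) (hB : Sc⁻¹ = B * star B) :
    klGauss Sc μc Ss μs = (1 / 2) * ((star B * Ss * B).trace
      + (μc - μs) ⬝ᵥ (Sc⁻¹ *ᵥ (μc - μs)) - Real.log (star B * Ss * B).det - n) := by
  have htrace : (Sc⁻¹ * Ss).trace = (star B * Ss * B).trace := by
    rw [hB, trace_mul_cycle (star B)]
  rw [klGauss, htrace, det_star_mul_mul_eq_div_of_inv_eq_mul_star hB, ← inv_div Sc.det,
    Real.log_inv]
  ring

theorem klGauss_max_logdet_unique_general {n : ℕ} (hn : 1 ≤ n)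
    (Sc : Matrix (Fin n) (Fin n) ℝ) (hSc : Sc.PosDef) (μc : Fin n → ℝ)
    (ε : ℝ)
    (astar : ℝ) (hastar1 : 1 ≤ astar)
    (hastar : astar - Real.log astar - 1 = 4 * ε ^ 2 / n)
    (μs : Fin n → ℝ) (Ss : Matrix (Fin n) (Fin n) ℝ) (hSs : Ss.PosDef)
    (hfeas : klGauss Sc μc Ss μs ≤ 2 * ε ^ 2)
    (hmax : Real.log Ss.det = (n : ℝ) * Real.log astar + Real.log Sc.det) :
    μs = μc ∧ Ss = astar • Sc := by
  obtain ⟨B, hB, hScB⟩ :=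
    CStarAlgebra.isStrictlyPositive_iff_eq_mul_star_self.mp hSc.inv.isStrictlyPositive
  set M := star B * Ss * B
  set q := (μc - μs) ⬝ᵥ (Sc⁻¹ *ᵥ (μc - μs))
  have hM : M.PosDef := hB.posDef_star_left_conjugate_iff.mpr hSs
  have hq : 0 ≤ q := by
    simpa only [star_trivial] using hSc.inv.posSemidef.dotProduct_mulVec_nonneg (μc - μs)
  have hlogdet : Real.log M.det = n * Real.log astar := by
    rw [det_star_mul_mul_eq_div_of_inv_eq_mul_star hScB,
      Real.log_div hSs.det_pos.ne' hSc.det_pos.ne', hmax, add_sub_cancel_right]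
  have htrace : M.trace + q ≤ n * astar := by
    have h4ε : 4 * ε ^ 2 = n * (astar - Real.log astar - 1) := by
      rw [hastar]
      field_simp
    rw [klGauss_eq_of_inv_eq_mul_star μc μs hScB, hlogdet] at hfeas
    linarith
  have hMa : M = astar • 1 := hM.eq_smul_one_of_trace_le_of_log_det_eq (by linarith)
    (by rwa [Fintype.card_fin]) (by rw [Fintype.card_fin]; linarith)
  have hq0 : q = 0 := by
    have : M.trace = n * astar := by simp [hMa, mul_comm]
    linarith
  refine ⟨?_, ?_⟩
  · by_contra hne
    have hpos := hSc.inv.dotProduct_mulVec_pos (sub_ne_zero.mpr (Ne.symm hne))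
    rw [star_trivial] at hpos
    linarith
  · rw [eq_smul_inv_of_star_mul_mul_eq_smul_one hB hMa, ← hScB,
      nonsing_inv_nonsing_inv _ hSc.det_pos.ne'.isUnit]

/-- Theorem 2 (matrix form, uniqueness of maximizer): a feasible pair attaining
the greatest value `n · log a* + log det Σc` must be `μs = μc`, `Σs = a* • Σc`. -/
theorem klGauss_max_logdet_unique {n : ℕ} (hn : 1 ≤ n)
    (Sc : Matrix (Fin n) (Fin n) ℝ) (hSc : Sc.PosDef) (μc : Fin n → ℝ)
    (ε : ℝ) (hε : 0 < ε)
    (astar : ℝ) (hastar1 : 1 ≤ astar)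
    (hastar : astar - Real.log astar - 1 = 4 * ε ^ 2 / n)
    (μs : Fin n → ℝ) (Ss : Matrix (Fin n) (Fin n) ℝ) (hSs : Ss.PosDef)
    (hfeas : klGauss Sc μc Ss μs ≤ 2 * ε ^ 2)
    (hmax : Real.log Ss.det = (n : ℝ) * Real.log astar + Real.log Sc.det) :
    μs = μc ∧ Ss = astar • Sc :=
  klGauss_max_logdet_unique_general hn Sc hSc μc ε astar hastar1 hastar μs Ss hSs hfeas hmax
end

section
/- Square root law for the Gaussian steganographic model: let ε > 0. For every feasible pair (μs, Σs), one has (1/2)·( Real.log (det Σs) − Real.log (det Σc) ) ≤ 2 · ε · Real.sqrt n. (The left-hand side is the maximum embedding rate H(P_s) − H(P_c) of the stego-object over the cover; thus the maximum embedding rate grows at most like the square root of the number of cover elements.) -/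
/-!
Whitening by a factor `Σc⁻¹ = Bᴴ B` turns `Σs` into a positive definite `A = B Σs Bᴴ` with
`tr A = tr (Σc⁻¹ Σs)` and `det A = det Σs / det Σc`, so feasibility says that the eigenvalues
`λᵢ > 0` of `A` satisfy `∑ (λᵢ - log λᵢ - 1) ≤ 4ε²`. The scalar inequality
`log λ ≤ 2 √(λ - log λ - 1)` and Cauchy–Schwarz then give
`log det A = ∑ log λᵢ ≤ 2 √n √(∑ (λᵢ - log λᵢ - 1)) ≤ 4ε √n`.
-/

open Matrix

open Real Finset

lemma Real.log_le_two_mul_sqrt_sub_log_sub_one {x : ℝ} (hx : 0 < x) :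
    log x ≤ 2 * √(x - log x - 1) := by
  rcases le_or_gt x 1 with hx1 | hx1
  · exact (log_nonpos hx.le hx1).trans (by positivity)
  · set u := log x with hu
    -- `exp u ≥ (1 + u / 2) ^ 2 = 1 + u + (u / 2) ^ 2` for `u ≥ 0`
    have hsq : (u / 2) ^ 2 ≤ x - u - 1 := by
      have hexp : exp (u / 2) ^ 2 = x := by
        rw [← exp_nat_mul, show ((2 : ℕ) : ℝ) * (u / 2) = u by push_cast; ring, hu,
          exp_log hx]
      nlinarith [add_one_le_exp (u / 2), log_nonneg hx1.le]
    linarith [le_abs_self (u / 2), abs_le_sqrt hsq]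

lemma Real.sum_log_le_two_mul_sqrt_card_mul_sqrt {ι : Type*} (s : Finset ι) {x : ι → ℝ}
    (hx : ∀ i ∈ s, 0 < x i) :
    ∑ i ∈ s, log (x i) ≤ 2 * √(#s) * √(∑ i ∈ s, (x i - log (x i) - 1)) := by
  have hgap : ∀ i ∈ s, 0 ≤ x i - log (x i) - 1 := fun i hi => by
    linarith [log_le_sub_one_of_pos (hx i hi)]
  have hcs := sum_mul_le_sqrt_mul_sqrt s (fun _ => 1) fun i => √(x i - log (x i) - 1)
  simp only [one_pow, one_mul, sum_const, nsmul_eq_mul, mul_one] at hcs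
  rw [sum_congr rfl fun i hi => sq_sqrt (hgap i hi)] at hcs
  calc ∑ i ∈ s, log (x i) ≤ ∑ i ∈ s, 2 * √(x i - log (x i) - 1) :=
        sum_le_sum fun i hi => log_le_two_mul_sqrt_sub_log_sub_one (hx i hi)
    _ ≤ 2 * √(#s) * √(∑ i ∈ s, (x i - log (x i) - 1)) := by
        rw [← mul_sum, mul_assoc]; gcongr

lemma Matrix.PosDef.log_det_le {ι : Type*} [Fintype ι] [DecidableEq ι]
    {A : Matrix ι ι ℝ} (hA : A.PosDef) :
    log A.det ≤ 2 * √(Fintype.card ι) * √(A.trace - log A.det - Fintype.card ι) := by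
  have hlog : log A.det = ∑ i, log (hA.1.eigenvalues i) := by
    rw [hA.1.det_eq_prod_eigenvalues]
    exact log_prod fun i _ => (hA.eigenvalues_pos i).ne'
  have htr : A.trace = ∑ i, hA.1.eigenvalues i := by simpa using hA.1.trace_eq_sum_eigenvalues
  have := sum_log_le_two_mul_sqrt_card_mul_sqrt univ fun i _ => hA.eigenvalues_pos i
  rw [sum_sub_distrib, sum_sub_distrib, ← hlog, ← htr] at this
  simpa using this

open scoped MatrixOrder ComplexOrder in
lemma Matrix.PosDef.exists_posDef_trace_det_eq {𝕜 ι : Type*} [RCLike 𝕜] [Fintype ι]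
    [DecidableEq ι] {P S : Matrix ι ι 𝕜} (hP : P.PosDef) (hS : S.PosDef) :
    ∃ A : Matrix ι ι 𝕜, A.PosDef ∧ A.trace = (P * S).trace ∧ A.det = P.det * S.det := by
  obtain ⟨B, rfl⟩ := CStarAlgebra.nonneg_iff_eq_star_mul_self.mp hP.posSemidef.nonneg
  have hB : IsUnit B := by
    rw [isUnit_iff_isUnit_det, isUnit_iff_ne_zero]
    intro h
    simpa [det_mul, h] using hP.det_pos.ne'
  refine ⟨B * S * star B, hB.posDef_star_right_conjugate_iff.mpr hS, ?_, ?_⟩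
  · rw [trace_mul_cycle, mul_assoc]
  · simp only [det_mul]; ring

lemma trace_inv_mul_sub_log_det_div_sub_le_two_mul_klGauss {n : ℕ}
    {Sc : Matrix (Fin n) (Fin n) ℝ} (hSc : Sc.PosDef) (μc : Fin n → ℝ)
    (Ss : Matrix (Fin n) (Fin n) ℝ) (μs : Fin n → ℝ) :
    (Sc⁻¹ * Ss).trace - log (Ss.det / Sc.det) - n ≤ 2 * klGauss Sc μc Ss μs := by
  have hquad : 0 ≤ (μc - μs) ⬝ᵥ (Sc⁻¹ *ᵥ (μc - μs)) := by
    simpa using hSc.inv.posSemidef.dotProduct_mulVec_nonneg (μc - μs)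
  have hlog : log (Sc.det / Ss.det) = -log (Ss.det / Sc.det) := by rw [← log_inv, inv_div]
  rw [klGauss, hlog]
  linarith

theorem square_root_law_gaussian_general {n : ℕ}
    (Sc : Matrix (Fin n) (Fin n) ℝ) (hSc : Sc.PosDef) (μc : Fin n → ℝ)
    (ε : ℝ) (hε : 0 < ε)
    (μs : Fin n → ℝ) (Ss : Matrix (Fin n) (Fin n) ℝ) (hSs : Ss.PosDef)
    (hfeas : klGauss Sc μc Ss μs ≤ 2 * ε ^ 2) :
    (1 / 2) * (Real.log Ss.det - Real.log Sc.det) ≤ 2 * ε * Real.sqrt n := by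
  obtain ⟨A, hA, htr, hdet⟩ := hSc.inv.exists_posDef_trace_det_eq hSs
  have hdetA : A.det = Ss.det / Sc.det := by
    rw [hdet, det_nonsing_inv, Ring.inverse_eq_inv']; ring
  have hgap : A.trace - log A.det - n ≤ (2 * ε) ^ 2 := by
    rw [htr, hdetA]
    linarith [trace_inv_mul_sub_log_det_div_sub_le_two_mul_klGauss hSc μc Ss μs]
  have hsqrt : √(A.trace - log A.det - n) ≤ 2 * ε :=
    (sqrt_le_sqrt hgap).trans_eq (sqrt_sq (by positivity))
  calc (1 / 2) * (log Ss.det - log Sc.det) = (1 / 2) * log A.det := by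
        rw [hdetA, log_div hSs.det_pos.ne' hSc.det_pos.ne']
    _ ≤ (1 / 2) * (2 * √n * √(A.trace - log A.det - n)) := by
        gcongr; simpa using hA.log_det_le
    _ ≤ (1 / 2) * (2 * √n * (2 * ε)) := by gcongr
    _ = 2 * ε * √n := by ring

/-- Square root law for the Gaussian steganographic model: for every feasible
pair `(μs, Σs)`, the embedding rate `(1/2)(log det Σs − log det Σc)` is at most
`2 · ε · √n`. -/
theorem square_root_law_gaussian {n : ℕ} (hn : 1 ≤ n)
    (Sc : Matrix (Fin n) (Fin n) ℝ) (hSc : Sc.PosDef) (μc : Fin n → ℝ)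
    (ε : ℝ) (hε : 0 < ε)
    (μs : Fin n → ℝ) (Ss : Matrix (Fin n) (Fin n) ℝ) (hSs : Ss.PosDef)
    (hfeas : klGauss Sc μc Ss μs ≤ 2 * ε ^ 2) :
    (1 / 2) * (Real.log Ss.det - Real.log Sc.det) ≤ 2 * ε * Real.sqrt n :=
  square_root_law_gaussian_general Sc hSc μc ε hε μs Ss hSs hfeas
end
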